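/- arXiv:math/0207287 — 4 statements merged into one kernel-verified Lean document; each statement's English description precedes it below -/
import Mathlib

section
/- Let T be a finite-dimensional complex vector space and let A be a linear subspace of the space of symmetric bilinear forms on T. Suppose q ∈ A has maximal rank among all elements of A, i.e. rank(Q) ≤ rank(q) for every Q ∈ A. Then Sing(q) ⊆ Base(A): every v ∈ T with q(v,w) = 0 for all w ∈ T satisfies Q(v,v) = 0 for every Q ∈ A. -/
/-!
Suppose `q v = 0` but `Q v v ≠ 0` for some `Q ∈ A`. The hyperplane `K = ker Q(v, ·)` is a
complement of `v`, so the restriction `q|_K` already has the full rank of `q`. Rank is lower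
semicontinuous along the pencil `q + t Q`, so for all but finitely many `t` the restriction
`(q + t Q)|_K` still has rank at least `rank q`. For `t ≠ 0` the form `P = q + t Q` has
`P(v, ·) = t Q(v, ·)`, which vanishes on `K` while `P(v, v) ≠ 0`; by symmetry `P(v, ·)` is then
not in the image of `K`, so `rank P > rank q`, contradicting maximality.
-/

/-- The rank of a bilinear form on `T`: the rank of the induced linear map
`T → T*`, `v ↦ q(v,·)`. -/
noncomputable def bilinRank {T : Type*} [AddCommGroup T] [Module ℂ T]
    (q : T →ₗ[ℂ] T →ₗ[ℂ] ℂ) : ℕ :=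
  Module.finrank ℂ (LinearMap.range q)

section

open Module LinearMap Submodule

variable {K V : Type*} [Field K] [AddCommGroup V] [Module K V]

theorem Module.End.finite_setOf_not_injective_one_add_smul [FiniteDimensional K V]
    (M : Module.End K V) : {t : K | ¬ Function.Injective ⇑(1 + t • M)}.Finite := by
  refine (M.finite_hasEigenvalue.image fun μ => -μ⁻¹).subset
    fun t (ht : ¬ Function.Injective _) => ?_
  obtain ⟨x, hx, hx0⟩ : ∃ x ∈ ker (1 + t • M), x ≠ 0 := by
    rw [← ker_eq_bot] at ht
    exact (Submodule.ne_bot_iff _).mp ht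
  rw [mem_ker, LinearMap.add_apply, one_apply, LinearMap.smul_apply] at hx
  have ht0 : t ≠ 0 := by
    rintro rfl
    exact hx0 (by simpa using hx)
  have hMx : M x = (-t⁻¹) • x := by
    rw [neg_smul, eq_neg_iff_add_eq_zero, ← smul_right_injective V ht0 |>.eq_iff, smul_add,
      smul_inv_smul₀ ht0, smul_zero, add_comm, hx]
  exact ⟨-t⁻¹, hasEigenvalue_of_hasEigenvector ⟨mem_eigenspace_iff.mpr hMx, hx0⟩, by simp⟩

theorem LinearMap.finite_setOf_finrank_range_add_smul_lt {W : Type*} [AddCommGroup W]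
    [Module K W] [FiniteDimensional K V] (f g : V →ₗ[K] W) :
    {t : K | finrank K (range (f + t • g)) < finrank K (range f)}.Finite := by
  obtain ⟨U, hU⟩ := (ker f).exists_isCompl
  obtain ⟨C, hC⟩ := (range f).exists_isCompl
  -- Through `f : U ≃ range f` and a projection onto `range f`, `f + t • g` becomes `1 + t • M`.
  let e : U ≃ₗ[K] range f := (quotientEquivOfIsCompl _ _ hU).symm ≪≫ₗ f.quotKerEquivRange
  let π : W →ₗ[K] range f := (range f).projectionOnto C hC
  let M : Module.End K U := e.symm ∘ₗ π ∘ₗ g ∘ₗ U.subtype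
  have he : ∀ u : U, π (f u) = e u := fun u => by
    have hmk : (quotientEquivOfIsCompl _ _ hU).symm u = Submodule.Quotient.mk (u : V) := by
      rw [LinearEquiv.symm_apply_eq, quotientEquivOfIsCompl_apply_mk_right]
    rw [show e u = ⟨f u, mem_range_self f u⟩ from Subtype.ext (by simp [e, hmk])]
    exact projectionOnto_apply_left hC ⟨f u, mem_range_self f u⟩
  have hM : ∀ t : K, e.symm.toLinearMap ∘ₗ π ∘ₗ (f + t • g) ∘ₗ U.subtype = 1 + t • M := by
    intro t; ext u; simp [M, he]
  refine (Module.End.finite_setOf_not_injective_one_add_smul M).subset fun t ht hinj => ?_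
  have hinj' : Function.Injective ((f + t • g) ∘ₗ U.subtype) := by
    rw [← hM, coe_comp, coe_comp] at hinj
    exact hinj.of_comp.of_comp
  refine (Set.mem_ofPred_eq ▸ ht).not_ge ?_
  calc finrank K (range f) = finrank K U := e.finrank_eq.symm
    _ = finrank K (range ((f + t • g) ∘ₗ U.subtype)) := (finrank_range_of_inj hinj').symm
    _ ≤ finrank K (range (f + t • g)) := Submodule.finrank_mono (range_comp_le_range _ _)

theorem LinearMap.range_domRestrict_ker_eq_range {W : Type*} [AddCommGroup W] [Module K W]
    (f : V →ₗ[K] W) {φ : Module.Dual K V} {v : V} (hfv : f v = 0) (hφv : φ v ≠ 0) :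
    range (f.domRestrict (ker φ)) = range f := by
  refine le_antisymm (range_domRestrict_le_range _ _) ?_
  rintro _ ⟨w, rfl⟩
  exact ⟨⟨w - (φ w / φ v) • v, by simp [hφv]⟩, by simp [hfv]⟩

theorem LinearMap.range_domRestrict_ker_lt_range {B : V →ₗ[K] V →ₗ[K] K}
    (hB : ∀ x y, B x y = B y x) {v : V} (hv : B v v ≠ 0) :
    range (B.domRestrict (ker (B v))) < range B := by
  refine lt_of_le_of_ne (range_domRestrict_le_range _ _) fun h => hv ?_
  obtain ⟨k, hk⟩ : B v ∈ range (B.domRestrict (ker (B v))) := h ▸ mem_range_self B v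
  rw [← hk, domRestrict_apply, hB]
  exact k.2

end

/-- Classical Bertini: if `q` has maximal rank in a linear system `A` of symmetric
bilinear forms on a finite-dimensional complex vector space, then every singular
vector of `q` lies in the base locus of `A`. -/
theorem bertini_max_rank {T : Type*} [AddCommGroup T] [Module ℂ T]
    [FiniteDimensional ℂ T]
    (A : Submodule ℂ (T →ₗ[ℂ] T →ₗ[ℂ] ℂ))
    (hsymm : ∀ Q ∈ A, ∀ v w : T, Q v w = Q w v)
    (q : T →ₗ[ℂ] T →ₗ[ℂ] ℂ) (hq : q ∈ A)
    (hmax : ∀ Q ∈ A, bilinRank Q ≤ bilinRank q)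
    (v : T) (hv : ∀ w : T, q v w = 0) :
    ∀ Q ∈ A, Q v v = 0 := by
  intro Q hQ
  by_contra hQv
  have hqv : q v = 0 := LinearMap.ext hv
  set K := LinearMap.ker (Q v)
  obtain ⟨t, ht⟩ := ((LinearMap.finite_setOf_finrank_range_add_smul_lt (q.domRestrict K)
    (Q.domRestrict K)).union (Set.finite_singleton 0)).exists_notMem
  simp only [Set.mem_union, Set.mem_ofPred_eq, Set.mem_singleton_iff, not_or, not_lt] at ht
  obtain ⟨hrank, ht0⟩ := ht
  set P := q + t • Q
  have hPA : P ∈ A := A.add_mem hq (A.smul_mem t hQ)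
  have hPv : P v = t • Q v := by simp [P, hqv]
  have hPvv : P v v ≠ 0 := by simp [hPv, ht0, hQv]
  have hlt := Submodule.finrank_lt_finrank_of_lt
    (LinearMap.range_domRestrict_ker_lt_range (hsymm P hPA) hPvv)
  rw [hPv, LinearMap.ker_smul _ _ ht0] at hlt
  refine (hmax P hPA).not_gt ?_
  calc bilinRank q = Module.finrank ℂ (LinearMap.range (q.domRestrict K)) := by
        rw [bilinRank, LinearMap.range_domRestrict_ker_eq_range q hqv hQv]
    _ ≤ Module.finrank ℂ (LinearMap.range (P.domRestrict K)) := hrank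
    _ < bilinRank P := hlt
end

section
/- Let q and Q be symmetric bilinear forms on a finite-dimensional complex vector space T, and suppose v ∈ T satisfies q(v,w) = 0 for all w ∈ T while Q(v,v) ≠ 0. Then there exists t ∈ ℂ such that rank(q + t·Q) > rank(q). -/
open Module Matrix Polynomial

section GramMatrix

variable {K M : Type*} [Field K] [AddCommGroup M] [Module K M]

def gramMatrix {ι : Type*} (B : M →ₗ[K] M →ₗ[K] K) (e : ι → M) : Matrix ι ι K :=
  Matrix.of fun i j => B (e i) (e j)

theorem gramMatrix_add_smul {ι : Type*} (B B' : M →ₗ[K] M →ₗ[K] K) (t : K) (e : ι → M) :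
    gramMatrix (B + t • B') e = gramMatrix B e + t • gramMatrix B' e := by
  ext
  simp [gramMatrix]

theorem gramMatrix_sum_elim {ι κ : Type*} (B : M →ₗ[K] M →ₗ[K] K) (b : ι → M) (u : κ → M) :
    gramMatrix B (Sum.elim b u) =
      fromBlocks (gramMatrix B b) (of fun i j => B (b i) (u j)) (of fun i j => B (u i) (b j))
        (gramMatrix B u) := by
  ext (i | i) (j | j) <;> rfl

theorem card_le_finrank_range_of_det_gramMatrix_ne_zero [FiniteDimensional K M]
    {ι : Type*} [Fintype ι] [DecidableEq ι] (B : M →ₗ[K] M →ₗ[K] K) (e : ι → M)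
    (h : (gramMatrix B e).det ≠ 0) :
    Fintype.card ι ≤ finrank K (LinearMap.range B) := by
  have hli : LinearIndependent K fun i => B (e i) := by
    refine Fintype.linearIndependent_iff.mpr fun c hc => ?_
    refine congrFun (eq_zero_of_vecMul_eq_zero h (funext fun j => ?_))
    simpa [vecMul, dotProduct, gramMatrix] using LinearMap.congr_fun hc (e j)
  calc Fintype.card ι = finrank K (Submodule.span K (Set.range fun i => B (e i))) :=
        (finrank_span_eq_card hli).symm
    _ ≤ finrank K (LinearMap.range B) :=
        Submodule.finrank_mono
          (Submodule.span_le.mpr (Set.range_subset_iff.mpr fun i => ⟨e i, rfl⟩))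

theorem disjoint_orthogonalBilin_of_isCompl_ker {B : M →ₗ[K] M →ₗ[K] K}
    (hB : ∀ x y, B x y = B y x) {W : Submodule K M} (hW : IsCompl (LinearMap.ker B) W) :
    Disjoint W (W.orthogonalBilin B) := by
  refine Submodule.disjoint_def.mpr fun x hxW hxo => ?_
  have hker : LinearMap.ker B ⊔ W ≤ LinearMap.ker (B x) :=
    sup_le (fun k hk => (hB x k).trans (LinearMap.congr_fun hk x))
      (fun w hw => (hB x w).trans (Submodule.mem_orthogonalBilin_iff.mp hxo w hw))
  have hx : x ∈ LinearMap.ker B :=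
    LinearMap.ker_eq_top.mp (top_le_iff.mp (hW.sup_eq_top ▸ hker))
  exact Submodule.disjoint_def.mp hW.disjoint x hx hxW

theorem exists_det_gramMatrix_ne_zero [FiniteDimensional K M] (B : M →ₗ[K] M →ₗ[K] K)
    (hB : ∀ x y, B x y = B y x) :
    ∃ b : Fin (finrank K (LinearMap.range B)) → M, (gramMatrix B b).det ≠ 0 := by
  obtain ⟨W, hW⟩ := (LinearMap.ker B).exists_isCompl
  have hrank : finrank K W = finrank K (LinearMap.range B) := by
    have := LinearMap.finrank_range_add_finrank_ker B
    have := Submodule.finrank_add_eq_of_isCompl hW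
    omega
  let b := finBasisOfFinrankEq K W hrank
  have hnd : (LinearMap.BilinForm.restrict B W).Nondegenerate :=
    LinearMap.BilinForm.nondegenerate_restrict_of_disjoint_orthogonal B
      (fun x y h => (hB y x).trans h) (disjoint_orthogonalBilin_of_isCompl_ker hB hW)
  have hgram : LinearMap.BilinForm.toMatrix b (LinearMap.BilinForm.restrict B W) =
      gramMatrix B fun i => b i := by
    ext i j
    simp [gramMatrix, LinearMap.BilinForm.toMatrix_apply]
  exact ⟨fun i => b i, hgram ▸ (LinearMap.BilinForm.nondegenerate_iff_det_ne_zero b).mp hnd⟩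

end GramMatrix

theorem exists_det_fromBlocks_add_smul_ne_zero {K n m : Type*} [Field K] [Infinite K]
    [Fintype n] [Fintype m] [DecidableEq n] [DecidableEq m] (A₀ A : Matrix n n K)
    (B : Matrix n m K) (C : Matrix m n K) (D : Matrix m m K) (hA₀ : A₀.det ≠ 0)
    (hD : D.det ≠ 0) :
    ∃ t : K, (fromBlocks A₀ 0 0 0 + t • fromBlocks A B C D).det ≠ 0 := by
  let N : Matrix (n ⊕ m) (n ⊕ m) K[X] :=
    fromBlocks (A₀.map Polynomial.C + (X : K[X]) • A.map Polynomial.C)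
      ((X : K[X]) • B.map Polynomial.C) (C.map Polynomial.C) (D.map Polynomial.C)
  have hN : ∀ t : K, (N.map (eval t)).det = N.det.eval t := fun t =>
    (RingHom.map_det (evalRingHom t) N).symm
  have hfactor : ∀ t : K, fromBlocks A₀ 0 0 0 + t • fromBlocks A B C D =
      fromBlocks 1 0 0 (t • 1) * N.map (eval t) := by
    intro t
    rw [fromBlocks_map, fromBlocks_multiply, fromBlocks_smul, fromBlocks_add]
    congr 1 <;> ext <;> simp <;> ring
  have hN0 : N.det.eval 0 = A₀.det * D.det := by
    rw [← hN, show N.map (eval 0) = fromBlocks A₀ 0 C D by ext (i | i) (j | j) <;> simp [N],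
      det_fromBlocks_zero₁₂]
  have hXN : X * N.det ≠ 0 :=
    mul_ne_zero X_ne_zero fun h => mul_ne_zero hA₀ hD (by rw [← hN0, h, eval_zero])
  obtain ⟨t, ht⟩ : ∃ t : K, (X * N.det).eval t ≠ 0 := by
    by_contra! h
    exact hXN (zero_of_eval_zero _ h)
  rw [eval_mul, eval_X] at ht
  refine ⟨t, ?_⟩
  rw [hfactor, det_mul, det_fromBlocks_zero₁₂, det_smul, det_one, det_one, mul_one, one_mul, hN]
  exact mul_ne_zero (pow_ne_zero _ (left_ne_zero_of_mul ht)) (right_ne_zero_of_mul ht)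

theorem rank_jump_general {T : Type*} [AddCommGroup T] [Module ℂ T]
    [FiniteDimensional ℂ T]
    (q Q : T →ₗ[ℂ] T →ₗ[ℂ] ℂ)
    (hq : ∀ v w : T, q v w = q w v)
    (v : T) (hv : ∀ w : T, q v w = 0) (hQv : Q v v ≠ 0) :
    ∃ t : ℂ, bilinRank q < bilinRank (q + t • Q) := by
  obtain ⟨b, hb⟩ := exists_det_gramMatrix_ne_zero q hq
  let e := Sum.elim b fun _ : Unit => v
  have hqe : gramMatrix q e = fromBlocks (gramMatrix q b) 0 0 0 := by
    rw [gramMatrix_sum_elim]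
    congr <;> ext <;> simp [gramMatrix, hv, hq _ v]
  obtain ⟨t, ht⟩ := exists_det_fromBlocks_add_smul_ne_zero (gramMatrix q b) (gramMatrix Q b)
    (of fun i _ => Q (b i) v) (of fun _ j => Q v (b j)) (gramMatrix Q fun _ : Unit => v) hb
    (by simpa [gramMatrix] using hQv)
  refine ⟨t, ?_⟩
  have hrank := card_le_finrank_range_of_det_gramMatrix_ne_zero (q + t • Q) e
    (by rwa [gramMatrix_add_smul, hqe, gramMatrix_sum_elim])
  simpa [bilinRank] using hrank

/-- Rank-jump: if `v` is a singular vector of the symmetric bilinear form `q`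
but `Q(v,v) ≠ 0`, then some form `q + t • Q` in the pencil through `q` in the
direction of `Q` has rank strictly larger than that of `q`. -/
theorem rank_jump {T : Type*} [AddCommGroup T] [Module ℂ T]
    [FiniteDimensional ℂ T]
    (q Q : T →ₗ[ℂ] T →ₗ[ℂ] ℂ)
    (hq : ∀ v w : T, q v w = q w v) (hQ : ∀ v w : T, Q v w = Q w v)
    (v : T) (hv : ∀ w : T, q v w = 0) (hQv : Q v v ≠ 0) :
    ∃ t : ℂ, bilinRank q < bilinRank (q + t • Q) :=
  rank_jump_general q Q hq v hv hQv
end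

section
/- Let T be a finite-dimensional complex vector space and let A be a nonzero linear subspace of the space of symmetric bilinear forms on T. Then there exists a dense open subset U ⊆ A such that for every q ∈ U, Sing(q) ⊆ Base(A), i.e. every v ∈ T with q(v,w) = 0 for all w ∈ T satisfies Q(v,v) = 0 for every Q ∈ A. -/
/-!
Let `r` be the largest size of a nonsingular Gram matrix `(q wᵢ wⱼ)` of a form `q ∈ A`, and take
for `U` the forms of `A` having such a Gram matrix of size `r`. It is open because determinants
are continuous, and dense because on every line of `A` the Gram determinant is a polynomial that
is not identically zero. If `q ∈ U` had a singular vector `v` with `Q v v ≠ 0` for some `Q ∈ A`,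
then by symmetry the row and column of `v` in the Gram matrix of `q + t • Q` on `(w, v)` are `t`
times those of `Q`, so its determinant is `t` times a continuous function of `t` whose value at
`0` is `det (q wᵢ wⱼ) * Q v v ≠ 0`; for small `t ≠ 0` this contradicts the maximality of `r`.
-/

open Filter Topology Matrix

section Analytic

variable {𝕜 : Type*} [NontriviallyNormedField 𝕜] {E F : Type*} [NormedAddCommGroup E]
  [NormedSpace 𝕜 E] [NormedAddCommGroup F] [NormedSpace 𝕜 F]

theorem AnalyticOnNhd.dense_setOf_ne_zero [PreconnectedSpace E] {f : E → F}
    (hf : AnalyticOnNhd 𝕜 f Set.univ) {x : E} (hx : f x ≠ 0) : Dense {y | f y ≠ 0} := by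
  refine dense_iff_inter_open.2 fun U hU ⟨z, hz⟩ => ?_
  by_contra hUf
  have hfz : f =ᶠ[𝓝 z] 0 := by
    filter_upwards [hU.mem_nhds hz] with y hy
    by_contra hfy
    exact hUf ⟨y, hy, hfy⟩
  exact hx (hf.eqOn_zero_of_preconnected_of_eventuallyEq_zero isPreconnected_univ trivial hfz
    trivial)

theorem AnalyticAt.matrix_det {n : Type*} [Fintype n] [DecidableEq n] {f : E → Matrix n n 𝕜}
    {x : E} (hf : ∀ i j, AnalyticAt 𝕜 (fun y => f y i j) x) :
    AnalyticAt 𝕜 (fun y => (f y).det) x := by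
  simp_rw [det_apply']
  fun_prop

theorem Submodule.dense_setOf_ne_zero_of_analyticOnNhd_line [PreconnectedSpace 𝕜]
    {M : Type*} [AddCommGroup M] [Module 𝕜 M] [TopologicalSpace M] [IsTopologicalAddGroup M]
    [ContinuousSMul 𝕜 M] (A : Submodule 𝕜 M) {f : M → F}
    (hf : ∀ x y : M, AnalyticOnNhd 𝕜 (fun t : 𝕜 => f (x + t • y)) Set.univ) {x₁ : M}
    (hx₁ : x₁ ∈ A) (h : f x₁ ≠ 0) : Dense {x : A | f x ≠ 0} := by
  intro x₀
  let γ : 𝕜 → A := fun t =>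
    ⟨x₀ + t • (x₁ - x₀), A.add_mem x₀.2 (A.smul_mem t (A.sub_mem hx₁ x₀.2))⟩
  have hγ : Continuous γ := by fun_prop
  have hdense : Dense {t : 𝕜 | f (γ t) ≠ 0} :=
    (hf x₀ (x₁ - x₀)).dense_setOf_ne_zero (x := 1) (by simpa [γ] using h)
  have hγ0 : γ 0 ∈ closure (γ '' {t | f (γ t) ≠ 0}) :=
    mem_closure_image hγ.continuousAt (hdense.closure_eq ▸ trivial)
  refine closure_mono ?_ (by simpa [γ] using hγ0)
  rintro _ ⟨t, ht, rfl⟩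
  exact ht

end Analytic

namespace ContinuousLinearMap

variable {𝕜 : Type*} [NontriviallyNormedField 𝕜] {E : Type*} [NormedAddCommGroup E]
  [NormedSpace 𝕜 E] {ι : Type*}

def gram (q : E →L[𝕜] E →L[𝕜] 𝕜) (w : ι → E) : Matrix ι ι 𝕜 :=
  Matrix.of fun i j => q (w i) (w j)

def HasNonsingularGram (q : E →L[𝕜] E →L[𝕜] 𝕜) (m : ℕ) : Prop :=
  ∃ w : Fin m → E, (q.gram w).det ≠ 0

theorem hasNonsingularGram_zero (q : E →L[𝕜] E →L[𝕜] 𝕜) : q.HasNonsingularGram 0 :=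
  ⟨Fin.elim0, by simp⟩

theorem hasNonsingularGram_card_of_det_ne_zero [Fintype ι] [DecidableEq ι]
    {q : E →L[𝕜] E →L[𝕜] 𝕜} {w : ι → E} (hw : (q.gram w).det ≠ 0) :
    q.HasNonsingularGram (Fintype.card ι) := by
  let e := (Fintype.equivFin ι).symm
  refine ⟨w ∘ e, ?_⟩
  rwa [show q.gram (w ∘ e) = (q.gram w).submatrix e e from rfl, det_submatrix_equiv_self]

theorem linearIndependent_of_det_gram_ne_zero [Fintype ι] [DecidableEq ι]
    (q : E →L[𝕜] E →L[𝕜] 𝕜) {w : ι → E} (hw : (q.gram w).det ≠ 0) :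
    LinearIndependent 𝕜 w := by
  refine Fintype.linearIndependent_iff.2 fun c hc => congrFun (eq_zero_of_vecMul_eq_zero hw ?_)
  funext j
  have hcj : q (∑ i, c i • w i) (w j) = 0 := by rw [hc]; simp
  simpa [vecMul, dotProduct, gram] using hcj

theorem HasNonsingularGram.le_finrank [FiniteDimensional 𝕜 E] {q : E →L[𝕜] E →L[𝕜] 𝕜}
    {m : ℕ} (hq : q.HasNonsingularGram m) : m ≤ Module.finrank 𝕜 E := by
  obtain ⟨w, hw⟩ := hq
  simpa using (q.linearIndependent_of_det_gram_ne_zero hw).fintype_card_le_finrank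

theorem continuous_det_gram [Fintype ι] [DecidableEq ι] (w : ι → E) :
    Continuous fun q : E →L[𝕜] E →L[𝕜] 𝕜 => (q.gram w).det :=
  Continuous.matrix_det <| continuous_matrix fun i j => by simp only [gram, of_apply]; fun_prop

theorem isOpen_setOf_hasNonsingularGram (m : ℕ) :
    IsOpen {q : E →L[𝕜] E →L[𝕜] 𝕜 | q.HasNonsingularGram m} := by
  simp only [HasNonsingularGram, Set.ofPred_exists]
  exact isOpen_iUnion fun w => isOpen_ne_fun (continuous_det_gram w) continuous_const

theorem dense_setOf_hasNonsingularGram [PreconnectedSpace 𝕜]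
    (A : Submodule 𝕜 (E →L[𝕜] E →L[𝕜] 𝕜)) {q₁ : E →L[𝕜] E →L[𝕜] 𝕜} {m : ℕ} (hq₁ : q₁ ∈ A)
    (h : q₁.HasNonsingularGram m) :
    Dense {q : A | (q : E →L[𝕜] E →L[𝕜] 𝕜).HasNonsingularGram m} := by
  obtain ⟨w, hw⟩ := h
  have hline : ∀ q Q : E →L[𝕜] E →L[𝕜] 𝕜,
      AnalyticOnNhd 𝕜 (fun t : 𝕜 => ((q + t • Q).gram w).det) Set.univ := by
    refine fun q Q t _ => AnalyticAt.matrix_det fun i j => ?_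
    simp only [gram, of_apply, _root_.add_apply, _root_.smul_apply, smul_eq_mul]
    fun_prop
  have hdense : Dense {q : A | ((q : E →L[𝕜] E →L[𝕜] 𝕜).gram w).det ≠ 0} :=
    A.dense_setOf_ne_zero_of_analyticOnNhd_line
      (f := fun q : E →L[𝕜] E →L[𝕜] 𝕜 => (q.gram w).det) hline hq₁ hw
  exact hdense.mono fun q hq => ⟨w, hq⟩

theorem exists_det_gram_add_smul_sumElim_ne_zero [Fintype ι] [DecidableEq ι]
    {q Q : E →L[𝕜] E →L[𝕜] 𝕜} {w : ι → E} (hw : (q.gram w).det ≠ 0) {v : E}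
    (hv : ∀ u, q v u = 0) (hv' : ∀ u, q u v = 0) (hQv : Q v v ≠ 0) :
    ∃ t : 𝕜, ((q + t • Q).gram (Sum.elim w fun _ : Unit => v)).det ≠ 0 := by
  set e : ι ⊕ Unit → E := Sum.elim w fun _ => v
  set rowQ : ι ⊕ Unit → 𝕜 := fun j => Q v (e j)
  set N : 𝕜 → Matrix (ι ⊕ Unit) (ι ⊕ Unit) 𝕜 := fun t =>
    ((q + t • Q).gram e).updateRow (.inr ()) rowQ
  have hdet : ∀ t : 𝕜, ((q + t • Q).gram e).det = t * (N t).det := by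
    intro t
    have hrow : (q + t • Q).gram e = ((q + t • Q).gram e).updateRow (.inr ()) (t • rowQ) := by
      ext (i | ⟨⟩) j <;> simp [gram, rowQ, e, hv]
    conv_lhs => rw [hrow]
    exact det_updateRow_smul _ _ _ _
  have hN0 : (N 0).det = (q.gram w).det * Q v v := by
    have hblocks : N 0 =
        fromBlocks (q.gram w) 0 (of fun _ j => Q v (w j)) (of fun _ _ : Unit => Q v v) := by
      ext (i | i) (j | j) <;> simp [N, rowQ, e, gram, hv']
    rw [hblocks, det_fromBlocks_zero₁₂, det_unique (n := Unit)]
    rfl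
  have hN : Continuous fun t => (N t).det := by
    refine Continuous.matrix_det (Continuous.matrix_updateRow _ ?_ continuous_const)
    exact continuous_matrix fun i j => by simp only [gram, of_apply]; fun_prop
  have hN_ne : ∀ᶠ t in 𝓝[≠] 0, (N t).det ≠ 0 :=
    (hN.continuousAt.eventually_ne (by rw [hN0]; exact mul_ne_zero hw hQv)).filter_mono
      nhdsWithin_le_nhds
  obtain ⟨t, htN, ht⟩ := (hN_ne.and (eventually_mem_nhdsWithin (a := (0 : 𝕜)))).exists
  exact ⟨t, by rw [hdet]; exact mul_ne_zero ht htN⟩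

theorem HasNonsingularGram.exists_add_smul_succ {q Q : E →L[𝕜] E →L[𝕜] 𝕜} {m : ℕ}
    (hq : q.HasNonsingularGram m) {v : E} (hv : ∀ u, q v u = 0) (hv' : ∀ u, q u v = 0)
    (hQv : Q v v ≠ 0) : ∃ t : 𝕜, (q + t • Q).HasNonsingularGram (m + 1) := by
  obtain ⟨w, hw⟩ := hq
  obtain ⟨t, ht⟩ := exists_det_gram_add_smul_sumElim_ne_zero hw hv hv' hQv
  exact ⟨t, by simpa using hasNonsingularGram_card_of_det_ne_zero ht⟩

end ContinuousLinearMap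

open ContinuousLinearMap in
theorem bertini_generic_general {T : Type*} [NormedAddCommGroup T]
    [NormedSpace ℂ T] [FiniteDimensional ℂ T]
    (A : Submodule ℂ (T →L[ℂ] T →L[ℂ] ℂ))
    (hsymm : ∀ Q ∈ A, ∀ v w : T, Q v w = Q w v) :
    ∃ U : Set A, IsOpen U ∧ Dense U ∧
      ∀ q ∈ U, ∀ v : T, (∀ w : T, (q : T →L[ℂ] T →L[ℂ] ℂ) v w = 0) →
        ∀ Q ∈ A, Q v v = 0 := by
  set S : Set ℕ := {m | ∃ q ∈ A, q.HasNonsingularGram m}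
  have hS : BddAbove S := ⟨Module.finrank ℂ T, fun m ⟨_, _, hq⟩ => hq.le_finrank⟩
  obtain ⟨q₁, hq₁, hr⟩ : sSup S ∈ S :=
    Nat.sSup_mem ⟨0, 0, A.zero_mem, hasNonsingularGram_zero 0⟩ hS
  refine ⟨{q : A | (q : T →L[ℂ] T →L[ℂ] ℂ).HasNonsingularGram (sSup S)},
    (isOpen_setOf_hasNonsingularGram _).preimage continuous_subtype_val,
    dense_setOf_hasNonsingularGram A hq₁ hr, fun q hq v hv Q hQ => ?_⟩
  by_contra hQv
  obtain ⟨t, ht⟩ := hq.exists_add_smul_succ hv (fun u => hsymm _ q.2 u v ▸ hv u) hQv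
  exact (sSup S).not_succ_le_self (le_csSup hS ⟨_, A.add_mem q.2 (A.smul_mem t hQ), ht⟩)

/-- Classical Bertini theorem for linear systems of quadrics: for a nonzero
linear system `A` of symmetric bilinear forms on a finite-dimensional complex
vector space, there is a dense open subset `U ⊆ A` such that for every `q ∈ U`,
the singular locus of `q` is contained in the base locus of `A`. -/
theorem bertini_generic {T : Type*} [NormedAddCommGroup T]
    [NormedSpace ℂ T] [FiniteDimensional ℂ T]
    (A : Submodule ℂ (T →L[ℂ] T →L[ℂ] ℂ)) (hA : A ≠ ⊥)
    (hsymm : ∀ Q ∈ A, ∀ v w : T, Q v w = Q w v) :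
    ∃ U : Set A, IsOpen U ∧ Dense U ∧
      ∀ q ∈ U, ∀ v : T, (∀ w : T, (q : T →L[ℂ] T →L[ℂ] ℂ) v w = 0) →
        ∀ Q ∈ A, Q v v = 0 :=
  bertini_generic_general A hsymm
end

section
/- For every nonzero vector u ∈ ℂ⁵, the radical of the symmetric bilinear form b_u on Λ²ℂ⁵ (defined by u ∧ ω ∧ η = b_u(ω,η)·(e₁∧e₂∧e₃∧e₄∧e₅)) equals the 4-dimensional subspace u ∧ ℂ⁵ = {u ∧ w : w ∈ ℂ⁵}; in particular every element ω of this radical satisfies ω ∧ ω = 0, so the singular locus of every nonzero quadric in the Pfaffian system on Λ²ℂ⁵ is contained in the base locus of that system. -/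
/-!
Contracting with a functional `f` satisfying `f u = 1` is a graded derivation, so applying it to
`u ∧ x = 0` gives `x = u ∧ (f ⌋ x)`: the kernel of `u ∧ ·` is its image. On `Λ²ℂ⁵` this identifies
the kernel of `ω ↦ u ∧ ω` with `u ∧ ℂ⁵`, and on `ℂ⁵` it gives kernel `ℂ u`, whence rank 4. The
radical of `b_u` is that same kernel because the wedge pairing `Λ³ × Λ² → Λ⁵` is perfect: in the
basis `e_s` of the exterior algebra, multiplying by `e_{sᶜ}` isolates the coefficient of `e_s`.
-/

open ExteriorAlgebra

/-- The generator `e₁ ∧ e₂ ∧ e₃ ∧ e₄ ∧ e₅` of `Λ⁵ℂ⁵`, where `e₁, …, e₅` is the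
standard basis of `ℂ⁵ = Fin 5 → ℂ`. -/
noncomputable def topForm : ExteriorAlgebra ℂ (Fin 5 → ℂ) :=
  ι ℂ (Pi.single 0 1) * ι ℂ (Pi.single 1 1) * ι ℂ (Pi.single 2 1) *
    ι ℂ (Pi.single 3 1) * ι ℂ (Pi.single 4 1)

/-- The linear map `ℂ⁵ → Λ²ℂ⁵ ⊆ Λℂ⁵`, `w ↦ u ∧ w`, whose range is the
subspace `u ∧ ℂ⁵`. -/
noncomputable def wedgeWith (u : Fin 5 → ℂ) :
    (Fin 5 → ℂ) →ₗ[ℂ] ExteriorAlgebra ℂ (Fin 5 → ℂ) :=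
  (LinearMap.mulLeft ℂ (ι ℂ u)).comp (ι ℂ)

namespace ExteriorAlgebra

variable {R M : Type*} [CommRing R] [AddCommGroup M] [Module R M]

open CliffordAlgebra in
theorem contractLeft_mem_exteriorPower (f : Module.Dual R M) (n : ℕ) {x : ExteriorAlgebra R M}
    (hx : x ∈ ⋀[R]^(n + 1) M) : contractLeft f x ∈ ⋀[R]^n M := by
  induction n generalizing x with
  | zero =>
    rw [exteriorPower, zero_add, pow_one] at hx
    obtain ⟨m, rfl⟩ := hx
    rw [contractLeft_ι]
    exact Submodule.algebraMap_mem _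
  | succ n ih =>
    rw [exteriorPower, pow_succ'] at hx
    refine Submodule.mul_induction_on hx (fun a ha y hy => ?_) fun y z hy hz => ?_
    · obtain ⟨m, rfl⟩ := ha
      rw [contractLeft_ι_mul]
      refine sub_mem (Submodule.smul_mem _ _ hy) ?_
      rw [exteriorPower, pow_succ']
      exact Submodule.mul_mem_mul (LinearMap.mem_range_self _ m) (ih hy)
    · rw [map_add]
      exact add_mem hy hz

open CliffordAlgebra in
theorem eq_ι_mul_contractLeft_of_ι_mul_eq_zero {f : Module.Dual R M} {u : M} (hu : f u = 1)
    {x : ExteriorAlgebra R M} (hx : ι R u * x = 0) : x = ι R u * contractLeft f x := by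
  have h := congrArg (contractLeft f) hx
  rwa [contractLeft_ι_mul, hu, one_smul, map_zero, sub_eq_zero] at h

theorem ι_mul_ι_eq_zero_iff {f : Module.Dual R M} {u : M} (hu : f u = 1) (w : M) :
    ι R u * ι R w = 0 ↔ w ∈ R ∙ u := by
  refine ⟨fun h => ?_, fun h => ?_⟩
  · have hw := eq_ι_mul_contractLeft_of_ι_mul_eq_zero hu h
    rw [CliffordAlgebra.contractLeft_ι, ← Algebra.commutes, ← Algebra.smul_def, ← map_smul,
      ι_inj] at hw
    exact Submodule.mem_span_singleton.mpr ⟨f w, hw.symm⟩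
  · obtain ⟨c, rfl⟩ := Submodule.mem_span_singleton.mp h
    rw [map_smul, mul_smul_comm, ι_sq_zero, smul_zero]

theorem ι_mul_eq_zero_iff_exists_eq_ι_mul_ι {f : Module.Dual R M} {u : M} (hu : f u = 1)
    {ω : ExteriorAlgebra R M} (hω : ω ∈ ⋀[R]^2 M) :
    ι R u * ω = 0 ↔ ∃ w, ω = ι R u * ι R w := by
  refine ⟨fun h => ?_, fun ⟨w, hw⟩ => by rw [hw, ← mul_assoc, ι_sq_zero, zero_mul]⟩
  have hf : CliffordAlgebra.contractLeft f ω ∈ ⋀[R]^1 M := contractLeft_mem_exteriorPower f 1 hω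
  rw [exteriorPower, pow_one] at hf
  obtain ⟨w, hw⟩ := hf
  exact ⟨w, hw ▸ eq_ι_mul_contractLeft_of_ι_mul_eq_zero hu h⟩

theorem ι_mul_ι_mul_self (u w : M) : ι R u * ι R w * (ι R u * ι R w) = 0 := by
  rw [mul_assoc, ← mul_assoc (ι R w), eq_neg_of_add_eq_zero_right (ι_add_mul_swap u w)]
  simp [mul_assoc]

open Set.powersetCard in
theorem eq_zero_of_forall_mul_eq_zero {I : Type*} [LinearOrder I] [Fintype I]
    (b : Module.Basis I R M) {k l : ℕ} (hkl : l + k = Fintype.card I)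
    {x : ExteriorAlgebra R M} (hx : x ∈ ⋀[R]^k M) (h : ∀ η ∈ ⋀[R]^l M, x * η = 0) : x = 0 := by
  classical
  set c := (b.exteriorPower k).repr ⟨x, hx⟩
  have hx_sum : x = ∑ s, c s • b.ExteriorAlgebra s := by
    conv_lhs => rw [← Submodule.coe_mk x hx, ← (b.exteriorPower k).sum_repr ⟨x, hx⟩]
    simp [basis_eq_coe_basis, c]
  suffices ∀ s, c s = 0 by simp [hx_sum, this]
  intro s
  let t : Set.powersetCard I l := compl hkl s
  have hst : Disjoint s.val t.val := disjoint_compl_right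
  have hmul : x * b.ExteriorAlgebra t =
      c s • (permOfDisjoint hst).sign • b.ExteriorAlgebra (disjUnion hst) := by
    rw [hx_sum, Finset.sum_mul, Finset.sum_eq_single s]
    · rw [smul_mul_assoc, basis_mul_of_disjoint]
    · intro s' _ hs'
      rw [smul_mul_assoc, basis_mul_of_not_disjoint, smul_zero]
      rwa [coe_compl, disjoint_compl_right_iff, ← eq_iff_subset]
    · simp
  have h0 := h _ (basis_eq_coe_basis b t ▸ (b.exteriorPower l t).2)
  rw [hmul] at h0
  simpa [smul_eq_zero_iff_eq] using
    congrArg (fun y => b.ExteriorAlgebra.repr y (disjUnion hst)) h0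

end ExteriorAlgebra

theorem topForm_eq_basis_univ :
    topForm = (Pi.basisFun ℂ (Fin 5)).ExteriorAlgebra Finset.univ := by
  have hid : ⇑(Finset.univ.orderEmbOfFin (Finset.card_fin 5)) = id :=
    (Finset.orderEmbOfFin_unique _ (fun _ => Finset.mem_univ _) strictMono_id).symm
  rw [basis_apply_ofCard _ (Finset.card_fin 5)]
  simp [ιMulti_family, Set.powersetCard.ofFinEmbEquiv_symm_apply, Set.powersetCard.ofCard, hid,
    ιMulti_apply, mul_assoc, topForm, Matrix.vecTail]

theorem topForm_ne_zero : topForm ≠ 0 :=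
  topForm_eq_basis_univ ▸ Module.Basis.ne_zero _ _

/-- For every nonzero `u ∈ ℂ⁵`, the radical of the symmetric bilinear form
`b_u` on `Λ²ℂ⁵` (defined by `u ∧ ω ∧ η = b_u(ω, η) · (e₁ ∧ ⋯ ∧ e₅)`) equals
the subspace `u ∧ ℂ⁵ = {u ∧ w : w ∈ ℂ⁵}`, which is 4-dimensional; in
particular every `ω` in the radical satisfies `ω ∧ ω = 0`, i.e. lies in the
base locus of the Pfaffian system. -/
theorem pfaffian_quadric_radical (u : Fin 5 → ℂ) (hu : u ≠ 0)
    (b : (⋀[ℂ]^2 (Fin 5 → ℂ)) →ₗ[ℂ] (⋀[ℂ]^2 (Fin 5 → ℂ)) →ₗ[ℂ] ℂ)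
    (hb : ∀ ω η : ⋀[ℂ]^2 (Fin 5 → ℂ),
      ι ℂ u * (ω : ExteriorAlgebra ℂ (Fin 5 → ℂ)) *
          (η : ExteriorAlgebra ℂ (Fin 5 → ℂ)) =
        b ω η • topForm) :
    ({ω : ⋀[ℂ]^2 (Fin 5 → ℂ) | ∀ η : ⋀[ℂ]^2 (Fin 5 → ℂ), b ω η = 0} =
      {ω : ⋀[ℂ]^2 (Fin 5 → ℂ) |
        ∃ w : Fin 5 → ℂ, (ω : ExteriorAlgebra ℂ (Fin 5 → ℂ)) = ι ℂ u * ι ℂ w}) ∧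
    Module.finrank ℂ (LinearMap.range (wedgeWith u)) = 4 ∧
    ∀ ω : ⋀[ℂ]^2 (Fin 5 → ℂ), (∀ η : ⋀[ℂ]^2 (Fin 5 → ℂ), b ω η = 0) →
      (ω : ExteriorAlgebra ℂ (Fin 5 → ℂ)) * (ω : ExteriorAlgebra ℂ (Fin 5 → ℂ)) = 0 := by
  obtain ⟨f, hf⟩ := Module.Projective.exists_dual_eq_one ℂ hu
  have radical_iff (ω : ⋀[ℂ]^2 (Fin 5 → ℂ)) :
      (∀ η, b ω η = 0) ↔ ∃ w, (ω : ExteriorAlgebra ℂ (Fin 5 → ℂ)) = ι ℂ u * ι ℂ w := by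
    have hι : ι ℂ u ∈ ⋀[ℂ]^1 (Fin 5 → ℂ) := by
      rw [exteriorPower, pow_one]
      exact LinearMap.mem_range_self _ u
    simp_rw [← smul_eq_zero_iff_left topForm_ne_zero, ← hb]
    rw [← ι_mul_eq_zero_iff_exists_eq_ι_mul_ι hf ω.2]
    refine ⟨fun h => eq_zero_of_forall_mul_eq_zero (Pi.basisFun ℂ (Fin 5)) (k := 1 + 2) rfl
      (SetLike.mul_mem_graded hι ω.2) fun η hη => h ⟨η, hη⟩, fun h η => by rw [h, zero_mul]⟩
  refine ⟨Set.ext radical_iff, ?_, fun ω hω => ?_⟩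
  · have hker : LinearMap.ker (wedgeWith u) = ℂ ∙ u := Submodule.ext (ι_mul_ι_eq_zero_iff hf)
    have hrank := LinearMap.finrank_range_add_finrank_ker (wedgeWith u)
    rw [hker, finrank_span_singleton hu, Module.finrank_fin_fun] at hrank
    omega
  · obtain ⟨w, hw⟩ := (radical_iff ω).mp hω
    rw [hw, ι_mul_ι_mul_self]
end
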